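/- Completeness of the translation for !_{t}^{c,w}MacLL: if a sequent Γ ⇒ C is derivable in !_{t}^{c,w}MacLL (MacLL plus !L, !R, C, W, cut-free), then the translated sequent τ(Γ) ⇒ τ(C) is derivable in MacLL extended with the nonlogical axioms Φ^{Γ,C}_∞ and the cut rule, where Φ^{Γ,C}_∞ = Φ^X_∞ for X the set of all subformulas occurring in Γ ⇒ C. -/

import Mathlib

/-- Multiplicative exponential formulas: variables, unit, !, ⊗, →, ←. -/
inductive Fm : Type where
  | var : Nat → Fm
  | one : Fm
  | bang : Fm → Fm
  | tens : Fm → Fm → Fm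
  | arr : Fm → Fm → Fm      -- A → B
  | larr : Fm → Fm → Fm     -- B ← A
deriving DecidableEq

/-- Structures: binary trees of formulas, allowing the empty structure. -/
inductive Str : Type where
  | emp : Str
  | leaf : Fm → Str
  | comma : Str → Str → Str
deriving DecidableEq

/-- One-hole structure contexts. -/
inductive Ctx : Type where
  | hole : Ctx
  | commaL : Ctx → Str → Ctx
  | commaR : Str → Ctx → Ctx

/-- Plug a structure into the hole of a context. -/
def Ctx.fill : Ctx → Str → Str
  | .hole, Δ => Δ
  | .commaL c Δ, P => .comma (c.fill P) Δ
  | .commaR Γ c, P => .comma Γ (c.fill P)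

/-- !Γ : bang every leaf formula of a structure. -/
def bangStr : Str → Str
  | .emp => .emp
  | .leaf A => .leaf (.bang A)
  | .comma a b => .comma (bangStr a) (bangStr b)

/-- `StarBang Γ Γ'` : Γ' is Γ with some subset of its leaf formulas banged (!*Γ). -/
inductive StarBang : Str → Str → Prop where
  | emp : StarBang .emp .emp
  | leaf (A : Fm) : StarBang (.leaf A) (.leaf A)
  | leafBang (A : Fm) : StarBang (.leaf A) (.leaf (.bang A))
  | comma {a a' b b' : Str} : StarBang a a' → StarBang b b' →
      StarBang (.comma a b) (.comma a' b')

/-- Proper structures: nonempty binary trees of formulas (no occurrence of the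
empty structure), matching the grammar Γ ::= (Γ,Γ) | F. -/
inductive Str.proper : Str → Prop where
  | leaf (A : Fm) : (Str.leaf A).proper
  | comma {a b : Str} : a.proper → b.proper → (Str.comma a b).proper

/-- Flags selecting the optional modal/structural rules of a system. -/
structure Flags where
  bangL : Bool := false
  bangR : Bool := false
  bangRK : Bool := false
  bangR4 : Bool := false
  bangRK4 : Bool := false
  contr : Bool := false     -- single-formula contraction C
  contrK : Bool := false    -- structural contraction CK
  weak : Bool := false      -- weakening W
  cut : Bool := false

/-- Sequent derivability in MacLL extended by the rules selected by `fl`,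
with nonlogical axioms `Ax`. -/
inductive Der (fl : Flags) (Ax : Set (Str × Fm)) : Str → Fm → Prop where
  | ax {Γ : Str} {C : Fm} : (Γ, C) ∈ Ax → Der fl Ax Γ C
  | init (A : Fm) : Der fl Ax (.leaf A) A
  | tensL (Γ : Ctx) {A B C : Fm} :
      Der fl Ax (Γ.fill (.comma (.leaf A) (.leaf B))) C →
      Der fl Ax (Γ.fill (.leaf (.tens A B))) C
  | tensR {Γ Δ : Str} {A B : Fm} :
      Der fl Ax Γ A → Der fl Ax Δ B → Der fl Ax (.comma Γ Δ) (.tens A B)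
  | arrL (Γ : Ctx) {Δ : Str} {A B C : Fm} :
      Der fl Ax Δ A → Der fl Ax (Γ.fill (.leaf B)) C →
      Der fl Ax (Γ.fill (.comma Δ (.leaf (.arr A B)))) C
  | arrR {Γ : Str} {A B : Fm} :
      Der fl Ax (.comma (.leaf A) Γ) B → Der fl Ax Γ (.arr A B)
  | larrL (Γ : Ctx) {Δ : Str} {A B C : Fm} :
      Der fl Ax Δ A → Der fl Ax (Γ.fill (.leaf B)) C →
      Der fl Ax (Γ.fill (.comma (.leaf (.larr B A)) Δ)) C
  | larrR {Γ : Str} {A B : Fm} :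
      Der fl Ax (.comma Γ (.leaf A)) B → Der fl Ax Γ (.larr B A)
  | oneL (Γ : Ctx) {C : Fm} :
      Der fl Ax (Γ.fill .emp) C → Der fl Ax (Γ.fill (.leaf .one)) C
  | oneR : Der fl Ax .emp .one
  | bangL (Γ : Ctx) {A C : Fm} : fl.bangL = true →
      Der fl Ax (Γ.fill (.leaf A)) C → Der fl Ax (Γ.fill (.leaf (.bang A))) C
  | bangR {A C : Fm} : fl.bangR = true →
      Der fl Ax (.leaf A) C → Der fl Ax (.leaf (.bang A)) (.bang C)
  | bangRK {Γ : Str} {C : Fm} : fl.bangRK = true →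
      Der fl Ax Γ C → Der fl Ax (bangStr Γ) (.bang C)
  | bangR4 {A C : Fm} : fl.bangR4 = true →
      Der fl Ax (.leaf (.bang A)) C → Der fl Ax (.leaf (.bang A)) (.bang C)
  | bangRK4 {Γ Γ' : Str} {C : Fm} : fl.bangRK4 = true →
      StarBang Γ Γ' → Der fl Ax Γ' C → Der fl Ax (bangStr Γ) (.bang C)
  | contr (Γ : Ctx) {A : Fm} {C : Fm} : fl.contr = true →
      Der fl Ax (Γ.fill (.comma (.leaf (.bang A)) (.leaf (.bang A)))) C →
      Der fl Ax (Γ.fill (.leaf (.bang A))) C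
  | contrK (Γ : Ctx) {Δ : Str} {C : Fm} : fl.contrK = true → Δ.proper →
      Der fl Ax (Γ.fill (.comma (bangStr Δ) (bangStr Δ))) C →
      Der fl Ax (Γ.fill (bangStr Δ)) C
  | weak (Γ : Ctx) {A C : Fm} : fl.weak = true →
      Der fl Ax (Γ.fill .emp) C → Der fl Ax (Γ.fill (.leaf (.bang A))) C
  | cut (Γ : Ctx) {Δ : Str} {A C : Fm} : fl.cut = true →
      Der fl Ax Δ A → Der fl Ax (Γ.fill (.leaf A)) C →
      Der fl Ax (Γ.fill Δ) C

/-- Plain MacLL (no modal or structural rules, no cut). -/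
def macll : Flags := {}
/-- Translation τ into !-free formulas: τ(p_i)=p_{2i+1}, τ(!A)=p_{2⌈A⌉}. -/
def tau (enc : Fm → Nat) : Fm → Fm
  | .var i => .var (2 * i + 1)
  | .one => .one
  | .bang A => .var (2 * enc A)
  | .tens A B => .tens (tau enc A) (tau enc B)
  | .arr A B => .arr (tau enc A) (tau enc B)
  | .larr A B => .larr (tau enc A) (tau enc B)

/-- Leafwise extension of τ to structures. -/
def tauStr (enc : Fm → Nat) : Str → Str
  | .emp => .emp
  | .leaf A => .leaf (tau enc A)
  | .comma a b => .comma (tauStr enc a) (tauStr enc b)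

/-- The set of propositional variables of a formula. -/
def Fm.vars : Fm → Set Nat
  | .var i => {i}
  | .one => ∅
  | .bang A => A.vars
  | .tens A B => A.vars ∪ B.vars
  | .arr A B => A.vars ∪ B.vars
  | .larr A B => A.vars ∪ B.vars

def Str.vars : Str → Set Nat
  | .emp => ∅
  | .leaf A => A.vars
  | .comma a b => a.vars ∪ b.vars

/-- Subformulas of a formula. -/
def Fm.sub : Fm → Set Fm
  | .var i => {.var i}
  | .one => {.one}
  | .bang A => insert (.bang A) A.sub
  | .tens A B => insert (.tens A B) (A.sub ∪ B.sub)
  | .arr A B => insert (.arr A B) (A.sub ∪ B.sub)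
  | .larr A B => insert (.larr A B) (A.sub ∪ B.sub)

/-- The yield of a structure: the set of formulas occurring in it. -/
def Str.fms : Str → Set Fm
  | .emp => ∅
  | .leaf A => {A}
  | .comma a b => a.fms ∪ b.fms

/-- !-free formulas. -/
def Fm.bangFree : Fm → Prop
  | .var _ => True
  | .one => True
  | .bang _ => False
  | .tens A B => A.bangFree ∧ B.bangFree
  | .arr A B => A.bangFree ∧ B.bangFree
  | .larr A B => A.bangFree ∧ B.bangFree

def Str.bangFree : Str → Prop
  | .emp => True
  | .leaf A => A.bangFree
  | .comma a b => a.bangFree ∧ b.bangFree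

/-- The flags of the cut-free system !^S_M MacLL, for S ⊆ {c,w} and M ⊆ {k,t,4}
given by Booleans c, w, k, t, f4. -/
def sysFlags (c w k t f4 : Bool) : Flags where
  bangL := t
  bangR := !k && !f4
  bangRK := k && !f4
  bangR4 := !k && f4
  bangRK4 := k && f4
  contr := c && !k
  contrK := c && k
  weak := w
  cut := false

/-- MacLL with cut (used with nonlogical axioms). -/
def macllCut : Flags := { cut := true }
/-- The axiom sets Φ^X_n (for the light system without axiom 4): Φ^X_0 contains
p_{2⌈A⌉} ⇒ τ(A), p_{2⌈A⌉} ⇒ p_{2⌈A⌉} ⊗ p_{2⌈A⌉} and p_{2⌈A⌉} ⇒ 1 for !A ∈ X;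
Φ^X_{n+1} adds p_{2⌈A⌉} ⇒ p_{2⌈B⌉} whenever MacLL+Φ^X_n proves τ(A) ⇒ τ(B). -/
def Phi (enc : Fm → Nat) (X : Set Fm) : Nat → Set (Str × Fm)
  | 0 => {s | ∃ A, Fm.bang A ∈ X ∧
      (s = (Str.leaf (Fm.var (2 * enc A)), tau enc A) ∨
       s = (Str.leaf (Fm.var (2 * enc A)),
            Fm.tens (Fm.var (2 * enc A)) (Fm.var (2 * enc A))) ∨
       s = (Str.leaf (Fm.var (2 * enc A)), Fm.one))}
  | n + 1 => Phi enc X n ∪ {s | ∃ A B, Fm.bang A ∈ X ∧ Fm.bang B ∈ X ∧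
      s = (Str.leaf (Fm.var (2 * enc A)), Fm.var (2 * enc B)) ∧
      Der macllCut (Phi enc X n) (Str.leaf (tau enc A)) (tau enc B)}

/-- !_{t}^{c,w}MacLL, cut-free: MacLL + !L + !R + C + W. -/
def sys10 : Flags := { bangL := true, bangR := true, contr := true, weak := true }

/-!
Induction on the cut-free derivation. Since τ commutes with the logical connectives, every
MacLL rule translates to an instance of itself. The rules on a banged formula !A, whose
translation is the atom p = p_{2⌈A⌉}, are simulated by a cut against an axiom of Φ_0:
!L against p ⇒ τ(A), contraction against p ⇒ p ⊗ p (after ⊗L), weakening against p ⇒ 1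
(after 1L). For !R, the translated premise τ(A) ⇒ τ(C) uses only finitely many axioms, hence
is derivable from some Φ_n, so p_{2⌈A⌉} ⇒ p_{2⌈C⌉} is an axiom of Φ_{n+1}. By the subformula
property all formulas involved stay inside the subformula-closed set X.
-/

def tauCtx (enc : Fm → Nat) : Ctx → Ctx
  | .hole => .hole
  | .commaL c Δ => .commaL (tauCtx enc c) (tauStr enc Δ)
  | .commaR Γ c => .commaR (tauStr enc Γ) (tauCtx enc c)

theorem tauStr_fill (enc : Fm → Nat) (c : Ctx) (Δ : Str) :
    tauStr enc (c.fill Δ) = (tauCtx enc c).fill (tauStr enc Δ) := by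
  induction c <;> simp [Ctx.fill, tauCtx, tauStr, *]

theorem Str.fms_fill (c : Ctx) (Δ : Str) : (c.fill Δ).fms = (c.fill .emp).fms ∪ Δ.fms := by
  induction c with
  | hole => simp [Ctx.fill, Str.fms]
  | commaL c Θ ih => simp only [Ctx.fill, Str.fms, ih]; exact Set.union_right_comm _ _ _
  | commaR Θ c ih => simp only [Ctx.fill, Str.fms, ih]; exact (Set.union_assoc _ _ _).symm

theorem Str.fms_leaf_subset {A : Fm} {X : Set Fm} : (Str.leaf A).fms ⊆ X ↔ A ∈ X :=
  Set.singleton_subset_iff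

theorem Str.fms_comma_subset {a b : Str} {X : Set Fm} :
    (a.comma b).fms ⊆ X ↔ a.fms ⊆ X ∧ b.fms ⊆ X :=
  Set.union_subset_iff

theorem Str.fms_fill_subset {c : Ctx} {Δ : Str} {X : Set Fm} :
    (c.fill Δ).fms ⊆ X ↔ (c.fill .emp).fms ⊆ X ∧ Δ.fms ⊆ X := by
  rw [Str.fms_fill, Set.union_subset_iff]

theorem Fm.mem_sub_self (A : Fm) : A ∈ A.sub := by
  cases A <;> simp [Fm.sub]

theorem Fm.sub_subset_of_mem {A B : Fm} (h : A ∈ B.sub) : A.sub ⊆ B.sub := by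
  induction B with
  | var | one => simp only [Fm.sub, Set.mem_singleton_iff] at h; rw [h]
  | bang B ih =>
    rcases h with rfl | h
    · rfl
    · exact (ih h).trans (Set.subset_insert _ _)
  | tens B₁ B₂ ih₁ ih₂ | arr B₁ B₂ ih₁ ih₂ | larr B₁ B₂ ih₁ ih₂ =>
    rcases h with rfl | h | h
    · rfl
    · exact (ih₁ h).trans (Set.subset_union_left.trans (Set.subset_insert _ _))
    · exact (ih₂ h).trans (Set.subset_union_right.trans (Set.subset_insert _ _))

def SubClosed (X : Set Fm) : Prop := ∀ A ∈ X, A.sub ⊆ X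

theorem subClosed_biUnion_sub (S : Set Fm) : SubClosed (⋃ F ∈ S, F.sub) := by
  intro A hA
  obtain ⟨F, hF, hAF⟩ := Set.mem_iUnion₂.1 hA
  exact (Fm.sub_subset_of_mem hAF).trans (Set.subset_biUnion_of_mem hF)

namespace SubClosed

variable {X : Set Fm} {A B : Fm}

theorem bang (hX : SubClosed X) (h : Fm.bang A ∈ X) : A ∈ X :=
  hX _ h (by simp [Fm.sub, Fm.mem_sub_self])

theorem tens (hX : SubClosed X) (h : Fm.tens A B ∈ X) : A ∈ X ∧ B ∈ X :=
  ⟨hX _ h (by simp [Fm.sub, Fm.mem_sub_self]), hX _ h (by simp [Fm.sub, Fm.mem_sub_self])⟩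

theorem arr (hX : SubClosed X) (h : Fm.arr A B ∈ X) : A ∈ X ∧ B ∈ X :=
  ⟨hX _ h (by simp [Fm.sub, Fm.mem_sub_self]), hX _ h (by simp [Fm.sub, Fm.mem_sub_self])⟩

theorem larr (hX : SubClosed X) (h : Fm.larr A B ∈ X) : A ∈ X ∧ B ∈ X :=
  ⟨hX _ h (by simp [Fm.sub, Fm.mem_sub_self]), hX _ h (by simp [Fm.sub, Fm.mem_sub_self])⟩

end SubClosed

theorem Der.mono {fl : Flags} {Ax Ax' : Set (Str × Fm)} (hAx : Ax ⊆ Ax') {Γ : Str} {C : Fm}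
    (h : Der fl Ax Γ C) : Der fl Ax' Γ C := by
  induction h with
  | ax h => exact .ax (hAx h)
  | init A => exact .init A
  | tensL Γ _ ih => exact .tensL Γ ih
  | tensR _ _ ih₁ ih₂ => exact .tensR ih₁ ih₂
  | arrL Γ _ _ ih₁ ih₂ => exact .arrL Γ ih₁ ih₂
  | arrR _ ih => exact .arrR ih
  | larrL Γ _ _ ih₁ ih₂ => exact .larrL Γ ih₁ ih₂
  | larrR _ ih => exact .larrR ih
  | oneL Γ _ ih => exact .oneL Γ ih
  | oneR => exact .oneR
  | bangL Γ hf _ ih => exact .bangL Γ hf ih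
  | bangR hf _ ih => exact .bangR hf ih
  | bangRK hf _ ih => exact .bangRK hf ih
  | bangR4 hf _ ih => exact .bangR4 hf ih
  | bangRK4 hf hsb _ ih => exact .bangRK4 hf hsb ih
  | contr Γ hf _ ih => exact .contr Γ hf ih
  | contrK Γ hf hp _ ih => exact .contrK Γ hf hp ih
  | weak Γ hf _ ih => exact .weak Γ hf ih
  | cut Γ hf _ _ ih₁ ih₂ => exact .cut Γ hf ih₁ ih₂

theorem Der.exists_of_iUnion {fl : Flags} {Ax : ℕ → Set (Str × Fm)} (hAx : Monotone Ax)
    {Γ : Str} {C : Fm} (h : Der fl (⋃ n, Ax n) Γ C) : ∃ n, Der fl (Ax n) Γ C := by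
  have both {Γ₁ Γ₂ : Str} {C₁ C₂ : Fm} :
      (∃ n, Der fl (Ax n) Γ₁ C₁) → (∃ n, Der fl (Ax n) Γ₂ C₂) →
        ∃ n, Der fl (Ax n) Γ₁ C₁ ∧ Der fl (Ax n) Γ₂ C₂ := by
    rintro ⟨n₁, h₁⟩ ⟨n₂, h₂⟩
    exact ⟨max n₁ n₂, h₁.mono (hAx (le_max_left _ _)), h₂.mono (hAx (le_max_right _ _))⟩
  induction h with
  | ax h => obtain ⟨n, hn⟩ := Set.mem_iUnion.1 h; exact ⟨n, .ax hn⟩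
  | init A => exact ⟨0, .init A⟩
  | tensL Γ _ ih => obtain ⟨n, h⟩ := ih; exact ⟨n, .tensL Γ h⟩
  | tensR _ _ ih₁ ih₂ => obtain ⟨n, h₁, h₂⟩ := both ih₁ ih₂; exact ⟨n, .tensR h₁ h₂⟩
  | arrL Γ _ _ ih₁ ih₂ => obtain ⟨n, h₁, h₂⟩ := both ih₁ ih₂; exact ⟨n, .arrL Γ h₁ h₂⟩
  | arrR _ ih => obtain ⟨n, h⟩ := ih; exact ⟨n, .arrR h⟩
  | larrL Γ _ _ ih₁ ih₂ => obtain ⟨n, h₁, h₂⟩ := both ih₁ ih₂; exact ⟨n, .larrL Γ h₁ h₂⟩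
  | larrR _ ih => obtain ⟨n, h⟩ := ih; exact ⟨n, .larrR h⟩
  | oneL Γ _ ih => obtain ⟨n, h⟩ := ih; exact ⟨n, .oneL Γ h⟩
  | oneR => exact ⟨0, .oneR⟩
  | bangL Γ hf _ ih => obtain ⟨n, h⟩ := ih; exact ⟨n, .bangL Γ hf h⟩
  | bangR hf _ ih => obtain ⟨n, h⟩ := ih; exact ⟨n, .bangR hf h⟩
  | bangRK hf _ ih => obtain ⟨n, h⟩ := ih; exact ⟨n, .bangRK hf h⟩
  | bangR4 hf _ ih => obtain ⟨n, h⟩ := ih; exact ⟨n, .bangR4 hf h⟩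
  | bangRK4 hf hsb _ ih => obtain ⟨n, h⟩ := ih; exact ⟨n, .bangRK4 hf hsb h⟩
  | contr Γ hf _ ih => obtain ⟨n, h⟩ := ih; exact ⟨n, .contr Γ hf h⟩
  | contrK Γ hf hp _ ih => obtain ⟨n, h⟩ := ih; exact ⟨n, .contrK Γ hf hp h⟩
  | weak Γ hf _ ih => obtain ⟨n, h⟩ := ih; exact ⟨n, .weak Γ hf h⟩
  | cut Γ hf _ _ ih₁ ih₂ => obtain ⟨n, h₁, h₂⟩ := both ih₁ ih₂; exact ⟨n, .cut Γ hf h₁ h₂⟩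

theorem Phi_monotone (enc : Fm → Nat) (X : Set Fm) : Monotone (Phi enc X) :=
  monotone_nat_of_le_succ fun _ => Set.subset_union_left

section Translation

variable {enc : Fm → Nat} {X : Set Fm}

theorem der_tau_bangL {c : Ctx} {A D : Fm} (hA : Fm.bang A ∈ X)
    (h : Der macllCut (⋃ n, Phi enc X n) (tauStr enc (c.fill (.leaf A))) D) :
    Der macllCut (⋃ n, Phi enc X n) (tauStr enc (c.fill (.leaf (.bang A)))) D := by
  rw [tauStr_fill] at h ⊢
  exact .cut _ rfl (.ax (Set.mem_iUnion.2 ⟨0, A, hA, .inl rfl⟩)) h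

theorem der_tau_contr {c : Ctx} {A D : Fm} (hA : Fm.bang A ∈ X)
    (h : Der macllCut (⋃ n, Phi enc X n)
      (tauStr enc (c.fill (.comma (.leaf (.bang A)) (.leaf (.bang A))))) D) :
    Der macllCut (⋃ n, Phi enc X n) (tauStr enc (c.fill (.leaf (.bang A)))) D := by
  rw [tauStr_fill] at h ⊢
  exact .cut _ rfl (.ax (Set.mem_iUnion.2 ⟨0, A, hA, .inr (.inl rfl)⟩)) (.tensL _ h)

theorem der_tau_weak {c : Ctx} {A D : Fm} (hA : Fm.bang A ∈ X)
    (h : Der macllCut (⋃ n, Phi enc X n) (tauStr enc (c.fill .emp)) D) :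
    Der macllCut (⋃ n, Phi enc X n) (tauStr enc (c.fill (.leaf (.bang A)))) D := by
  rw [tauStr_fill] at h ⊢
  exact .cut _ rfl (.ax (Set.mem_iUnion.2 ⟨0, A, hA, .inr (.inr rfl)⟩)) (.oneL _ h)

theorem der_tau_bangR {A B : Fm} (hA : Fm.bang A ∈ X) (hB : Fm.bang B ∈ X)
    (h : Der macllCut (⋃ n, Phi enc X n) (.leaf (tau enc A)) (tau enc B)) :
    Der macllCut (⋃ n, Phi enc X n) (.leaf (tau enc (.bang A))) (tau enc (.bang B)) := by
  obtain ⟨n, hn⟩ := Der.exists_of_iUnion (Phi_monotone enc X) h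
  exact .ax (Set.mem_iUnion.2 ⟨n + 1, .inr ⟨A, B, hA, hB, rfl, hn⟩⟩)

theorem der_macllCut_tau_of_der_sys10 (hX : SubClosed X) {Γ : Str} {C : Fm}
    (h : Der sys10 ∅ Γ C) (hΓ : Γ.fms ⊆ X) (hC : C ∈ X) :
    Der macllCut (⋃ n, Phi enc X n) (tauStr enc Γ) (tau enc C) := by
  induction h with
  | ax h => exact absurd h (Set.notMem_empty _)
  | init A => exact .init _
  | tensL c _ ih =>
    obtain ⟨hc, hAB⟩ := Str.fms_fill_subset.1 hΓ
    obtain ⟨hA, hB⟩ := hX.tens (Str.fms_leaf_subset.1 hAB)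
    rw [tauStr_fill] at ih ⊢
    exact .tensL _ (ih (Str.fms_fill_subset.2
      ⟨hc, Str.fms_comma_subset.2 ⟨Str.fms_leaf_subset.2 hA, Str.fms_leaf_subset.2 hB⟩⟩) hC)
  | tensR _ _ ih₁ ih₂ =>
    obtain ⟨hA, hB⟩ := hX.tens hC
    exact .tensR (ih₁ (Str.fms_comma_subset.1 hΓ).1 hA) (ih₂ (Str.fms_comma_subset.1 hΓ).2 hB)
  | arrL c _ _ ih₁ ih₂ =>
    obtain ⟨hc, hΔ⟩ := Str.fms_fill_subset.1 hΓ
    rw [Str.fms_comma_subset, Str.fms_leaf_subset] at hΔ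
    obtain ⟨hA, hB⟩ := hX.arr hΔ.2
    rw [tauStr_fill] at ih₂ ⊢
    exact .arrL _ (ih₁ hΔ.1 hA) (ih₂ (Str.fms_fill_subset.2 ⟨hc, Str.fms_leaf_subset.2 hB⟩) hC)
  | arrR _ ih =>
    obtain ⟨hA, hB⟩ := hX.arr hC
    exact .arrR (ih (Str.fms_comma_subset.2 ⟨Str.fms_leaf_subset.2 hA, hΓ⟩) hB)
  | larrL c _ _ ih₁ ih₂ =>
    obtain ⟨hc, hΔ⟩ := Str.fms_fill_subset.1 hΓ
    rw [Str.fms_comma_subset, Str.fms_leaf_subset] at hΔ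
    obtain ⟨hB, hA⟩ := hX.larr hΔ.1
    rw [tauStr_fill] at ih₂ ⊢
    exact .larrL _ (ih₁ hΔ.2 hA) (ih₂ (Str.fms_fill_subset.2 ⟨hc, Str.fms_leaf_subset.2 hB⟩) hC)
  | larrR _ ih =>
    obtain ⟨hB, hA⟩ := hX.larr hC
    exact .larrR (ih (Str.fms_comma_subset.2 ⟨hΓ, Str.fms_leaf_subset.2 hA⟩) hB)
  | oneL c _ ih =>
    rw [tauStr_fill] at ih ⊢
    exact .oneL _ (ih (Str.fms_fill_subset.2
      ⟨(Str.fms_fill_subset.1 hΓ).1, Set.empty_subset _⟩) hC)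
  | oneR => exact .oneR
  | bangL c _ _ ih =>
    obtain ⟨hc, hA⟩ := Str.fms_fill_subset.1 hΓ
    rw [Str.fms_leaf_subset] at hA
    exact der_tau_bangL hA
      (ih (Str.fms_fill_subset.2 ⟨hc, Str.fms_leaf_subset.2 (hX.bang hA)⟩) hC)
  | bangR _ _ ih =>
    rw [Str.fms_leaf_subset] at hΓ
    exact der_tau_bangR hΓ hC (ih (Str.fms_leaf_subset.2 (hX.bang hΓ)) (hX.bang hC))
  | contr c _ _ ih =>
    obtain ⟨hc, hA⟩ := Str.fms_fill_subset.1 hΓ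
    exact der_tau_contr (Str.fms_leaf_subset.1 hA)
      (ih (Str.fms_fill_subset.2 ⟨hc, Str.fms_comma_subset.2 ⟨hA, hA⟩⟩) hC)
  | weak c _ _ ih =>
    obtain ⟨hc, hA⟩ := Str.fms_fill_subset.1 hΓ
    exact der_tau_weak (Str.fms_leaf_subset.1 hA)
      (ih (Str.fms_fill_subset.2 ⟨hc, Set.empty_subset _⟩) hC)
  | bangRK hf | bangR4 hf | bangRK4 hf | contrK _ hf | cut _ hf => exact absurd hf (by decide)

end Translation

theorem stmt10_general (enc : Fm → Nat)
    (Γ : Str) (C : Fm) (h : Der sys10 ∅ Γ C) :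
    Der macllCut (⋃ n, Phi enc (⋃ F ∈ insert C Γ.fms, F.sub) n)
      (tauStr enc Γ) (tau enc C) :=
  der_macllCut_tau_of_der_sys10 (subClosed_biUnion_sub _) h
    (fun F hF => Set.mem_biUnion (Set.mem_insert_of_mem _ hF) F.mem_sub_self)
    (Set.mem_biUnion (Set.mem_insert _ _) C.mem_sub_self)

/-- Completeness of the translation: if Γ ⇒ C is derivable in !_{t}^{c,w}MacLL,
then τ(Γ) ⇒ τ(C) is derivable in MacLL + Φ^{Γ,C}_∞ + cut, where the axioms are
built from the set of all subformulas of the endsequent. -/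
theorem stmt10 (enc : Fm → Nat) (henc : Function.Injective enc)
    (Γ : Str) (C : Fm) (h : Der sys10 ∅ Γ C) :
    Der macllCut (⋃ n, Phi enc (⋃ F ∈ insert C Γ.fms, F.sub) n)
      (tauStr enc Γ) (tau enc C) :=
  stmt10_general enc Γ C h
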